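/- arXiv:2212.06818 — 2 statements merged into one kernel-verified Lean document; each statement's English description precedes it below -/
import Mathlib

section
/- Let 𝒜 ∈ Sp(2d,ℝ) (a 4d×4d symplectic matrix with d×d blocks A_{ij}, i,j = 1,…,4). Then 𝒜 satisfies 𝒜·(z₁, z₁, z₂, −z₂) = (z₁, z₂, 0, 0) for all z₁, z₂ ∈ ℝ^d if and only if its block decomposition has the form: first row (A₁₁, I−A₁₁, A₁₃, A₁₃), second row (A₂₁, −A₂₁, I−A₁₁ᵀ, −A₁₁ᵀ), third row (0, 0, I, I), fourth row (−I, I, 0, 0), with A₁₃ = A₁₃ᵀ and A₂₁ = A₂₁ᵀ. -/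
/-!
Let `Π = covSource` and `Ω = covTarget` be the matrices of `(z₁, z₂) ↦ (z₁, z₁, z₂, -z₂)` and
`(z₁, z₂) ↦ (z₁, z₂, 0, 0)`, so that covariance says `𝒜 Π = Ω`: this fixes the sums
`A_{i1} + A_{i2}` and differences `A_{i3} - A_{i4}`. For symplectic `𝒜` it gives more:
`Ωᵀ J 𝒜 = (𝒜 Π)ᵀ J 𝒜 = Πᵀ (𝒜ᵀ J 𝒜) = Πᵀ J`, and `Ωᵀ J 𝒜` is the lower half of `𝒜`, so the
last two block rows are forced. Once they are known, writing `𝒜 = [[X, Y], [Z, W]]`, the parts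
`XᵀZ = ZᵀX`, `YᵀW = WᵀY` and `XᵀW - ZᵀY = I` of the symplectic condition give the symmetry of
`A₂₁` and `A₁₃` and `A₂₃ = I - A₁₁ᵀ`.
-/

open Matrix

section General

variable {m k R : Type*} [Fintype m]

theorem transpose_mul_mul_eq_of_mul_eq [CommSemiring R] {A J : Matrix m m R}
    {P Q : Matrix m k R} (hA : Aᵀ * J * A = J) (h : A * P = Q) : Qᵀ * J * A = Pᵀ * J := by
  rw [← h, transpose_mul, Matrix.mul_assoc, Matrix.mul_assoc, ← Matrix.mul_assoc Aᵀ, hA]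

theorem transpose_mul_fromBlocks_zero_one_mul_fromBlocks [CommRing R] [DecidableEq m]
    (X Y Z W : Matrix m m R) :
    (fromBlocks X Y Z W)ᵀ * fromBlocks 0 1 (-1) 0 * fromBlocks X Y Z W =
      fromBlocks (Xᵀ * Z - Zᵀ * X) (Xᵀ * W - Zᵀ * Y) (Yᵀ * Z - Wᵀ * X) (Yᵀ * W - Wᵀ * Y) := by
  simp [fromBlocks_transpose, fromBlocks_multiply, sub_eq_add_neg, add_comm]

end General

section Covariance

variable {n R : Type*} [DecidableEq n] [CommRing R]

variable (n R) in
def covSource : Matrix ((n ⊕ n) ⊕ (n ⊕ n)) (n ⊕ n) R :=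
  fromBlocks (fromRows 1 1) 0 0 (fromRows 1 (-1))

variable (n R) in
def covTarget : Matrix ((n ⊕ n) ⊕ (n ⊕ n)) (n ⊕ n) R := fromRows 1 0

theorem covTarget_eq_fromBlocks :
    covTarget n R = fromBlocks (fromRows 1 0) (fromRows 0 1) 0 0 := by
  ext ((i | i) | (i | i)) (j | j) <;> simp [covTarget, one_apply]

variable [Fintype n]

theorem covSource_mulVec_sumElim (z₁ z₂ : n → R) :
    covSource n R *ᵥ Sum.elim z₁ z₂ = Sum.elim (Sum.elim z₁ z₁) (Sum.elim z₂ (-z₂)) := by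
  simp [covSource, fromBlocks_mulVec, neg_mulVec]

theorem covTarget_mulVec_sumElim (z₁ z₂ : n → R) :
    covTarget n R *ᵥ Sum.elim z₁ z₂ = Sum.elim (Sum.elim z₁ z₂) (Sum.elim 0 0) := by
  simp [covTarget]

theorem covariant_iff_mul_covSource_eq (M : Matrix ((n ⊕ n) ⊕ (n ⊕ n)) ((n ⊕ n) ⊕ (n ⊕ n)) R) :
    (∀ z₁ z₂ : n → R, M *ᵥ Sum.elim (Sum.elim z₁ z₁) (Sum.elim z₂ (-z₂)) =
      Sum.elim (Sum.elim z₁ z₂) (Sum.elim 0 0)) ↔ M * covSource n R = covTarget n R := by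
  rw [ext_iff_mulVec]
  constructor
  · intro h v
    rw [← Sum.elim_comp_inl_inr v, ← mulVec_mulVec, covSource_mulVec_sumElim,
      covTarget_mulVec_sumElim, h]
  · intro h z₁ z₂
    rw [← covSource_mulVec_sumElim, mulVec_mulVec, h, covTarget_mulVec_sumElim]

theorem fromBlocks_mul_covSource_eq_covTarget_iff
    (A11 A12 A13 A14 A21 A22 A23 A24 A31 A32 A33 A34 A41 A42 A43 A44 : Matrix n n R) :
    fromBlocks (fromBlocks A11 A12 A21 A22) (fromBlocks A13 A14 A23 A24)
        (fromBlocks A31 A32 A41 A42) (fromBlocks A33 A34 A43 A44) * covSource n R =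
      covTarget n R ↔
    A12 = 1 - A11 ∧ A22 = -A21 ∧ A14 = A13 ∧ A24 = A23 - 1 ∧
      A32 = -A31 ∧ A42 = -A41 ∧ A34 = A33 ∧ A44 = A43 := by
  simp only [covSource, covTarget_eq_fromBlocks, fromBlocks_multiply, fromBlocks_mul_fromRows,
    mul_one, mul_neg, Matrix.mul_zero, add_zero, zero_add, ← sub_eq_add_neg, fromBlocks_inj]
  simp only [← fromRows_zero, fromRows_ext_iff, and_assoc, eq_sub_iff_add_eq',
    add_eq_zero_iff_eq_neg', eq_comm (a := A14), eq_comm (a := A34), eq_comm (a := A44),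
    sub_eq_iff_eq_add, zero_add, eq_comm (b := A23)]

theorem lower_blocks_eq_of_symplectic_of_mul_covSource {X Y Z W : Matrix (n ⊕ n) (n ⊕ n) R}
    (hsymp : (fromBlocks X Y Z W)ᵀ * fromBlocks 0 1 (-1) 0 * fromBlocks X Y Z W =
      fromBlocks 0 1 (-1) 0)
    (hcov : fromBlocks X Y Z W * covSource n R = covTarget n R) :
    Z = fromBlocks 0 0 (-1) 1 ∧ W = fromBlocks 1 1 0 0 := by
  have h := transpose_mul_mul_eq_of_mul_eq hsymp hcov
  simp only [covTarget, covSource, transpose_fromRows, fromBlocks_transpose, transpose_one,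
    transpose_zero, transpose_neg, fromBlocks_multiply, fromCols_mul_fromBlocks, fromCols_neg,
    Matrix.mul_zero, Matrix.mul_neg, Matrix.mul_one, mul_zero, mul_neg, mul_one, zero_mul,
    one_mul, neg_zero, neg_neg, add_zero, zero_add] at h
  rw [← fromCols_fromRows_eq_fromBlocks, fromCols_ext_iff] at h
  rw [h.1, h.2, ← fromRows_fromCols_eq_fromBlocks, ← fromRows_fromCols_eq_fromBlocks]
  simp

theorem upper_blocks_of_symplectic_of_covariant (A11 A13 A21 A23 : Matrix n n R)
    (hsymp : (fromBlocks (fromBlocks A11 (1 - A11) A21 (-A21)) (fromBlocks A13 A13 A23 (A23 - 1))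
        (fromBlocks 0 0 (-1) 1 : Matrix (n ⊕ n) (n ⊕ n) R) (fromBlocks 1 1 0 0))ᵀ *
      fromBlocks 0 1 (-1) 0 *
      fromBlocks (fromBlocks A11 (1 - A11) A21 (-A21)) (fromBlocks A13 A13 A23 (A23 - 1))
        (fromBlocks 0 0 (-1) 1) (fromBlocks 1 1 0 0) = fromBlocks 0 1 (-1) 0) :
    A13ᵀ = A13 ∧ A21ᵀ = A21 ∧ A23 = 1 - A11ᵀ := by
  rw [transpose_mul_fromBlocks_zero_one_mul_fromBlocks, fromBlocks_inj] at hsymp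
  obtain ⟨hXZ, hXW, -, hYW⟩ := hsymp
  rw [sub_eq_zero] at hXZ hYW
  simp only [sub_eq_add_neg, fromBlocks_transpose, transpose_add, transpose_one, transpose_neg,
    transpose_zero, fromBlocks_multiply, fromBlocks_neg, fromBlocks_add, ← fromBlocks_one,
    fromBlocks_inj, mul_zero, mul_neg, mul_one, zero_mul, neg_mul, one_mul, zero_add, add_zero,
    neg_neg, neg_inj, neg_add_rev, and_self] at hXZ hXW hYW
  exact ⟨hYW, hXZ, eq_sub_of_add_eq' hXW.1⟩

end Covariance

/-- Characterization of covariant symplectic matrices: a symplectic `4d×4d` matrix `𝒜`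
satisfies `𝒜·(z₁, z₁, z₂, −z₂) = (z₁, z₂, 0, 0)` for all `z₁, z₂ ∈ ℝ^d` iff its block
decomposition has the form with rows `(A₁₁, I−A₁₁, A₁₃, A₁₃)`, `(A₂₁, −A₂₁, I−A₁₁ᵀ, −A₁₁ᵀ)`,
`(0, 0, I, I)`, `(−I, I, 0, 0)`, with `A₁₃` and `A₂₁` symmetric. -/
theorem covariant_characterization (d : ℕ)
    (A11 A12 A13 A14 A21 A22 A23 A24 A31 A32 A33 A34 A41 A42 A43 A44 :
      Matrix (Fin d) (Fin d) ℝ)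
    (hsymp : (Matrix.fromBlocks
        (Matrix.fromBlocks A11 A12 A21 A22) (Matrix.fromBlocks A13 A14 A23 A24)
        (Matrix.fromBlocks A31 A32 A41 A42) (Matrix.fromBlocks A33 A34 A43 A44))ᵀ *
      (Matrix.fromBlocks 0 1 (-1) 0 :
        Matrix ((Fin d ⊕ Fin d) ⊕ (Fin d ⊕ Fin d)) ((Fin d ⊕ Fin d) ⊕ (Fin d ⊕ Fin d)) ℝ) *
      Matrix.fromBlocks
        (Matrix.fromBlocks A11 A12 A21 A22) (Matrix.fromBlocks A13 A14 A23 A24)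
        (Matrix.fromBlocks A31 A32 A41 A42) (Matrix.fromBlocks A33 A34 A43 A44) =
      Matrix.fromBlocks 0 1 (-1) 0) :
    (∀ z₁ z₂ : Fin d → ℝ,
        (Matrix.fromBlocks
          (Matrix.fromBlocks A11 A12 A21 A22) (Matrix.fromBlocks A13 A14 A23 A24)
          (Matrix.fromBlocks A31 A32 A41 A42)
          (Matrix.fromBlocks A33 A34 A43 A44)).mulVec
            (Sum.elim (Sum.elim z₁ z₁) (Sum.elim z₂ (-z₂))) =
          Sum.elim (Sum.elim z₁ z₂) (Sum.elim 0 0)) ↔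
      (A12 = 1 - A11 ∧ A14 = A13 ∧ A22 = -A21 ∧ A23 = 1 - A11ᵀ ∧ A24 = -A11ᵀ ∧
        A31 = 0 ∧ A32 = 0 ∧ A33 = 1 ∧ A34 = 1 ∧
        A41 = -1 ∧ A42 = 1 ∧ A43 = 0 ∧ A44 = 0 ∧
        A13ᵀ = A13 ∧ A21ᵀ = A21) := by
  constructor
  · intro hcov
    have hmul := (covariant_iff_mul_covSource_eq _).1 hcov
    obtain ⟨hZ, hW⟩ := lower_blocks_eq_of_symplectic_of_mul_covSource hsymp hmul
    simp only [fromBlocks_inj] at hZ hW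
    obtain ⟨h31, h32, h41, h42⟩ := hZ
    obtain ⟨h33, h34, h43, h44⟩ := hW
    obtain ⟨h12, h22, h14, h24, -⟩ := (fromBlocks_mul_covSource_eq_covTarget_iff ..).1 hmul
    subst A12 A14 A22 A24 A31 A32 A33 A34 A41 A42 A43 A44
    obtain ⟨h13, h21, rfl⟩ := upper_blocks_of_symplectic_of_covariant A11 A13 A21 A23 hsymp
    exact ⟨rfl, rfl, rfl, rfl, by abel, rfl, rfl, rfl, rfl, rfl, rfl, rfl, rfl, h13, h21⟩
  · rintro ⟨rfl, rfl, rfl, rfl, rfl, rfl, rfl, rfl, rfl, rfl, rfl, rfl, rfl, -, -⟩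
    rw [covariant_iff_mul_covSource_eq, fromBlocks_mul_covSource_eq_covTarget_iff]
    exact ⟨rfl, rfl, rfl, by abel, by simp, by simp, rfl, rfl⟩
end

section
/- Let 𝒜 ∈ Sp(2d,ℝ) be covariant, i.e., with block decomposition: row 1 = (A₁₁, I−A₁₁, A₁₃, A₁₃), row 2 = (A₂₁, −A₂₁, I−A₁₁ᵀ, −A₁₁ᵀ), row 3 = (0, 0, I, I), row 4 = (−I, I, 0, 0), where A₁₃ and A₂₁ are symmetric. Then 𝒜 = V_{B_𝒜}ᵀ · A_{1/2}, where B_𝒜 = [[A₁₃, ½I − A₁₁], [½I − A₁₁ᵀ, −A₂₁]] and A_{1/2} is the symplectic matrix of the classical Wigner distribution (the matrix A_τ with τ = 1/2), and V_B = [[I_{2d}, 0], [B, I_{2d}]]. -/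
/-! Left multiplication by `V_Bᵀ = [[I, B], [0, I]]` keeps the lower block row of `A_{1/2}`,
which is already that of `𝒜`, and adds `B` times it to the upper block row; with
`B = B_𝒜` this turns the upper row of `A_{1/2}` into that of `𝒜`. -/

open Matrix

namespace Matrix

variable {k l m n : Type*} {α : Type*} [Fintype m] [Fintype n] [Ring α]

theorem fromBlocks_one_zero_one_mul [DecidableEq m] [DecidableEq n] (B : Matrix m n α)
    (P : Matrix m l α) (Q : Matrix m k α) (R : Matrix n l α) (S : Matrix n k α) :
    (fromBlocks 1 B 0 1 : Matrix (m ⊕ n) (m ⊕ n) α) * fromBlocks P Q R S =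
      fromBlocks (P + B * R) (Q + B * S) R S := by
  simp only [fromBlocks_multiply, Matrix.one_mul, Matrix.zero_mul, zero_add]

theorem fromBlocks_mul_fromBlocks_zero_zero_neg_one_one [DecidableEq n] (a : Matrix k m α)
    (b : Matrix k n α) (c : Matrix l m α) (e : Matrix l n α) :
    fromBlocks a b c e * (fromBlocks 0 0 (-1) 1 : Matrix (m ⊕ n) (n ⊕ n) α) =
      fromBlocks (-b) b (-e) e := by
  simp only [fromBlocks_multiply, Matrix.mul_zero, Matrix.mul_neg, Matrix.mul_one, zero_add]

theorem fromBlocks_mul_fromBlocks_one_one_zero_zero [DecidableEq m] (a : Matrix k m α)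
    (b : Matrix k n α) (c : Matrix l m α) (e : Matrix l n α) :
    fromBlocks a b c e * (fromBlocks 1 1 0 0 : Matrix (m ⊕ n) (m ⊕ m) α) =
      fromBlocks a a c c := by
  simp only [fromBlocks_multiply, Matrix.mul_zero, Matrix.mul_one, add_zero]

end Matrix

theorem covariant_factorization_general (d : ℕ) (A11 A13 A21 : Matrix (Fin d) (Fin d) ℝ) :
    Matrix.fromBlocks
        (Matrix.fromBlocks A11 (1 - A11) A21 (-A21))
        (Matrix.fromBlocks A13 A13 (1 - A11ᵀ) (-A11ᵀ))
        (Matrix.fromBlocks 0 0 (-1) 1)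
        (Matrix.fromBlocks 1 1 0 0) =
      (Matrix.fromBlocks 1
          (Matrix.fromBlocks A13 ((1/2 : ℝ) • 1 - A11) ((1/2 : ℝ) • 1 - A11ᵀ) (-A21)) 0 1 :
        Matrix ((Fin d ⊕ Fin d) ⊕ (Fin d ⊕ Fin d)) ((Fin d ⊕ Fin d) ⊕ (Fin d ⊕ Fin d)) ℝ) *
        Matrix.fromBlocks
          (Matrix.fromBlocks ((1/2 : ℝ) • (1 : Matrix (Fin d) (Fin d) ℝ))
            ((1/2 : ℝ) • 1) 0 0)
          (Matrix.fromBlocks 0 0 ((1/2 : ℝ) • 1) (-((1/2 : ℝ) • 1)))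
          (Matrix.fromBlocks 0 0 (-1) 1)
          (Matrix.fromBlocks 1 1 0 0) := by
  rw [fromBlocks_one_zero_one_mul, fromBlocks_mul_fromBlocks_zero_zero_neg_one_one,
    fromBlocks_mul_fromBlocks_one_one_zero_zero, fromBlocks_add, fromBlocks_add]
  congr 2 <;> module

/-- A covariant symplectic matrix `𝒜` factors as `V_{B_𝒜}ᵀ · A_{1/2}`, where
`B_𝒜 = [[A₁₃, ½I − A₁₁], [½I − A₁₁ᵀ, −A₂₁]]` and `A_{1/2}` is the symplectic matrix of
the classical Wigner distribution. -/
theorem covariant_factorization (d : ℕ) (A11 A13 A21 : Matrix (Fin d) (Fin d) ℝ)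
    (hA13 : A13ᵀ = A13) (hA21 : A21ᵀ = A21) :
    Matrix.fromBlocks
        (Matrix.fromBlocks A11 (1 - A11) A21 (-A21))
        (Matrix.fromBlocks A13 A13 (1 - A11ᵀ) (-A11ᵀ))
        (Matrix.fromBlocks 0 0 (-1) 1)
        (Matrix.fromBlocks 1 1 0 0) =
      (Matrix.fromBlocks 1
          (Matrix.fromBlocks A13 ((1/2 : ℝ) • 1 - A11) ((1/2 : ℝ) • 1 - A11ᵀ) (-A21)) 0 1 :
        Matrix ((Fin d ⊕ Fin d) ⊕ (Fin d ⊕ Fin d)) ((Fin d ⊕ Fin d) ⊕ (Fin d ⊕ Fin d)) ℝ) *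
        Matrix.fromBlocks
          (Matrix.fromBlocks ((1/2 : ℝ) • (1 : Matrix (Fin d) (Fin d) ℝ))
            ((1/2 : ℝ) • 1) 0 0)
          (Matrix.fromBlocks 0 0 ((1/2 : ℝ) • 1) (-((1/2 : ℝ) • 1)))
          (Matrix.fromBlocks 0 0 (-1) 1)
          (Matrix.fromBlocks 1 1 0 0) :=
  covariant_factorization_general d A11 A13 A21
end
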